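/- arXiv:2207.00932 — 3 statements merged into one kernel-verified Lean document; each statement's English description precedes it below -/
import Mathlib

section
/- Let S be a nonempty topological space and let T be an operator on the space (S →ᵇ ℝ) of bounded continuous real-valued functions with the supremum norm. Assume (i) T is monotone: if f ≤ g pointwise then Tf ≤ Tg pointwise; and (ii) there exists β* with 0 ≤ β* < 1 such that for every f and every constant c ≥ 0, T(f + c·1)(s) ≤ Tf(s) + β*·c for all s ∈ S. Then T has a unique fixed point: there exists exactly one f* ∈ (S →ᵇ ℝ) with Tf* = f*. -/
open BoundedContinuousFunction

/-- Unique fixed point of the Deep Bellman Hedging operator: a monotone operator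
on bounded continuous functions satisfying discounted cash-invariance with
factor `β* < 1` has exactly one fixed point. -/
theorem deep_bellman_unique_fixed_point {S : Type*} [TopologicalSpace S] [Nonempty S]
    (T : (S →ᵇ ℝ) → (S →ᵇ ℝ))
    (hmono : ∀ f g : S →ᵇ ℝ, (∀ s, f s ≤ g s) → ∀ s, T f s ≤ T g s)
    (βstar : ℝ) (hβ0 : 0 ≤ βstar) (hβ1 : βstar < 1)
    (hcash : ∀ (f : S →ᵇ ℝ) (c : ℝ), 0 ≤ c →
      ∀ s, T (f + BoundedContinuousFunction.const S c) s ≤ T f s + βstar * c) :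
    ∃! fstar : S →ᵇ ℝ, T fstar = fstar := by
  -- one-sided estimate
  have key : ∀ f g : S →ᵇ ℝ, ∀ s, T f s - T g s ≤ βstar * dist f g := by
    intro f g s
    have hle : ∀ s, f s ≤ g s + dist f g := by
      intro s
      have := BoundedContinuousFunction.dist_coe_le_dist (f := f) (g := g) s
      have := abs_le.mp (by simpa [Real.dist_eq] using this) |>.2
      linarith
    have h1 : T f s ≤ T (g + BoundedContinuousFunction.const S (dist f g)) s :=
      hmono _ _ (by intro s; simpa using hle s) s
    have h2 := hcash g (dist f g) dist_nonneg s
    linarith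
  have hlip : ∀ f g : S →ᵇ ℝ, dist (T f) (T g) ≤ βstar * dist f g := by
    intro f g
    refine (BoundedContinuousFunction.dist_le (by positivity)).2 fun s => ?_
    rw [Real.dist_eq, abs_le]
    constructor
    · have := key g f s
      rw [dist_comm g f] at this
      linarith
    · have := key f g s; linarith
  have hβ : (⟨βstar, hβ0⟩ : NNReal) < 1 := by exact_mod_cast hβ1
  have hc : ContractingWith ⟨βstar, hβ0⟩ T :=
    ⟨hβ, LipschitzWith.of_dist_le_mul fun f g => hlip f g⟩
  refine ⟨hc.fixedPoint T, hc.fixedPoint_isFixedPt, fun g hg => ?_⟩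
  exact hc.fixedPoint_unique hg
end

section
/- Let (Ω, 𝓕, μ) be a probability space, u : ℝ → ℝ a concave function, α ∈ [0,1], and X, Y : Ω → ℝ random variables such that ω ↦ u(X(ω) + y), ω ↦ u(Y(ω) + y) and ω ↦ u(α X(ω) + (1−α) Y(ω) + y) are integrable for every y ∈ ℝ, and all three sets { E[u(Z + y)] − y : y ∈ ℝ } for Z ∈ {X, Y, αX + (1−α)Y} are bounded above. Then α·sup_{y}( E[u(X + y)] − y ) + (1−α)·sup_{y}( E[u(Y + y)] − y ) ≤ sup_{y}( E[u(α X + (1−α) Y + y)] − y ). That is, the OCE monetary utility is concave: U(αX + (1−α)Y) ≥ αU(X) + (1−α)U(Y). -/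
open MeasureTheory

/-- Concavity of the OCE monetary utility:
`U(αX + (1−α)Y) ≥ α U(X) + (1−α) U(Y)` where
`U(X) = sup_y (E[u(X + y)] − y)` for a concave `u`. -/
theorem oce_concave
    {Ω : Type*} [MeasurableSpace Ω] (μ : Measure Ω) [IsProbabilityMeasure μ]
    (u : ℝ → ℝ) (hu : ConcaveOn ℝ Set.univ u)
    (α : ℝ) (hα : α ∈ Set.Icc (0 : ℝ) 1) (X Y : Ω → ℝ)
    (hintX : ∀ y : ℝ, Integrable (fun ω => u (X ω + y)) μ)
    (hintY : ∀ y : ℝ, Integrable (fun ω => u (Y ω + y)) μ)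
    (hintXY : ∀ y : ℝ, Integrable (fun ω => u (α * X ω + (1 - α) * Y ω + y)) μ)
    (hbddX : BddAbove (Set.range fun y : ℝ => (∫ ω, u (X ω + y) ∂μ) - y))
    (hbddY : BddAbove (Set.range fun y : ℝ => (∫ ω, u (Y ω + y) ∂μ) - y))
    (hbddXY : BddAbove
      (Set.range fun y : ℝ => (∫ ω, u (α * X ω + (1 - α) * Y ω + y) ∂μ) - y)) :
    α * (⨆ y : ℝ, (∫ ω, u (X ω + y) ∂μ) - y)
        + (1 - α) * (⨆ y : ℝ, (∫ ω, u (Y ω + y) ∂μ) - y)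
      ≤ ⨆ y : ℝ, (∫ ω, u (α * X ω + (1 - α) * Y ω + y) ∂μ) - y := by
  obtain ⟨hα0, hα1⟩ := hα
  have h1α : (0:ℝ) ≤ 1 - α := by linarith
  set f : ℝ → ℝ := fun y => (∫ ω, u (X ω + y) ∂μ) - y with hf
  set g : ℝ → ℝ := fun y => (∫ ω, u (Y ω + y) ∂μ) - y with hg
  set h : ℝ → ℝ := fun y => (∫ ω, u (α * X ω + (1 - α) * Y ω + y) ∂μ) - y with hh
  have key : ∀ y₁ y₂ : ℝ, α * f y₁ + (1 - α) * g y₂ ≤ ⨆ y, h y := by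
    intro y₁ y₂
    set y := α * y₁ + (1 - α) * y₂ with hy
    have hpt : ∀ ω, α * u (X ω + y₁) + (1 - α) * u (Y ω + y₂)
        ≤ u (α * X ω + (1 - α) * Y ω + y) := by
      intro ω
      have := hu.2 (Set.mem_univ (X ω + y₁)) (Set.mem_univ (Y ω + y₂)) hα0 h1α
        (by ring : α + (1 - α) = 1)
      have harg : α * (X ω + y₁) + (1 - α) * (Y ω + y₂)
          = α * X ω + (1 - α) * Y ω + y := by rw [hy]; ring
      simp only [smul_eq_mul] at this
      rw [harg] at this
      exact this
    have hintsum : Integrable (fun ω => α * u (X ω + y₁) + (1 - α) * u (Y ω + y₂)) μ :=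
      ((hintX y₁).const_mul α).add ((hintY y₂).const_mul (1 - α))
    have hle : (∫ ω, α * u (X ω + y₁) + (1 - α) * u (Y ω + y₂) ∂μ)
        ≤ ∫ ω, u (α * X ω + (1 - α) * Y ω + y) ∂μ :=
      integral_mono hintsum (hintXY y) hpt
    have heq : (∫ ω, α * u (X ω + y₁) + (1 - α) * u (Y ω + y₂) ∂μ)
        = α * (∫ ω, u (X ω + y₁) ∂μ) + (1 - α) * (∫ ω, u (Y ω + y₂) ∂μ) := by
      rw [integral_add ((hintX y₁).const_mul α) ((hintY y₂).const_mul (1 - α)),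
        integral_const_mul, integral_const_mul]
    have hT : h y ≤ ⨆ y, h y := le_ciSup hbddXY y
    simp only [hf, hg, hh, hy] at *
    linarith
  rcases eq_or_lt_of_le hα0 with hα0' | hα0'
  · have hgs : ∀ y₂, g y₂ ≤ ⨆ y, h y := fun y₂ => by
      have := key 0 y₂; rw [← hα0'] at this; linarith
    have := ciSup_le hgs
    rw [← hα0']; simpa using this
  rcases eq_or_lt_of_le hα1 with hα1' | hα1'
  · have hfs : ∀ y₁, f y₁ ≤ ⨆ y, h y := fun y₁ => by
      have := key y₁ 0; rw [hα1'] at this; linarith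
    have := ciSup_le hfs
    rw [hα1']; simpa using this
  have h1α' : (0:ℝ) < 1 - α := by linarith
  have h1 : (⨆ y, f y) ≤ ((⨆ y, h y) - (1 - α) * ⨆ y, g y) / α := by
    refine ciSup_le fun y₁ => ?_
    rw [le_div_iff₀ hα0']
    have h2 : (⨆ y, g y) ≤ ((⨆ y, h y) - α * f y₁) / (1 - α) := by
      refine ciSup_le fun y₂ => ?_
      rw [le_div_iff₀ h1α']
      have := key y₁ y₂; linarith
    rw [le_div_iff₀ h1α'] at h2
    linarith
  rw [le_div_iff₀ hα0'] at h1
  linarith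
end

section
/- Let (Ω, 𝓕, μ) be a probability space, λ > 0, and let u(x) := (1 − e^{−λx})/λ. Let X : Ω → ℝ be measurable such that ω ↦ e^{−λ X(ω)} is integrable. Then sup_{y ∈ ℝ} ( E[u(X + y)] − y ) = −(1/λ) · log E[e^{−λ X}]. That is, the OCE monetary utility for the exponential (entropy) utility equals the entropic risk-adjusted value. -/
open MeasureTheory Real

/-!
Since `e^{-λ(x+y)} = e^{-λy} e^{-λx}`, the objective `E[u(X + y)] - y` equals
`(1 - e^{-λy} m)/λ - y` with `m = E[e^{-λX}] > 0`. With `s = log m - λy` this is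
`-(log m)/λ - (e^s - 1 - s)/λ`, so `e^s ≥ 1 + s` bounds it by `-(log m)/λ`, with equality at
`s = 0`, i.e. `y = (log m)/λ`.
-/

theorem integral_entropyUtility_add {Ω : Type*} [MeasurableSpace Ω] (μ : Measure Ω)
    [IsProbabilityMeasure μ] {lam : ℝ} {X : Ω → ℝ}
    (hint : Integrable (fun ω => exp (-lam * X ω)) μ) (y : ℝ) :
    ∫ ω, (1 - exp (-lam * (X ω + y))) / lam ∂μ
      = (1 - exp (-lam * y) * ∫ ω, exp (-lam * X ω) ∂μ) / lam := by
  have hsplit : ∀ ω, exp (-lam * (X ω + y)) = exp (-lam * y) * exp (-lam * X ω) := by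
    intro ω
    rw [← exp_add]
    ring_nf
  simp_rw [hsplit]
  rw [integral_div, integral_sub (integrable_const 1) (hint.const_mul _), integral_const_mul]
  simp

theorem isGreatest_range_entropicObjective {lam m : ℝ} (hlam : 0 < lam) (hm : 0 < m) :
    IsGreatest (Set.range fun y => (1 - exp (-lam * y) * m) / lam - y)
      (-(1 / lam) * log m) := by
  refine ⟨⟨log m / lam, ?_⟩, ?_⟩
  · have hexponent : -lam * (log m / lam) = -log m := by field_simp
    beta_reduce
    rw [hexponent, exp_neg, exp_log hm, inv_mul_cancel₀ hm.ne']
    ring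
  · rintro _ ⟨y, rfl⟩
    have hexp : exp (-lam * y) * m = exp (log m - lam * y) := by
      rw [exp_sub, exp_log hm, neg_mul, exp_neg]
      ring
    have hgap : -(1 / lam) * log m - ((1 - exp (log m - lam * y)) / lam - y)
        = (exp (log m - lam * y) - (log m - lam * y + 1)) / lam := by
      field_simp
      ring
    have hgap_nonneg := div_nonneg (sub_nonneg.2 (add_one_le_exp (log m - lam * y))) hlam.le
    beta_reduce
    rw [hexp]
    linarith

theorem oce_entropy_general
    {Ω : Type*} [MeasurableSpace Ω] (μ : Measure Ω) [IsProbabilityMeasure μ]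
    (lam : ℝ) (hlam : 0 < lam)
    (u : ℝ → ℝ) (hu : ∀ x, u x = (1 - Real.exp (-lam * x)) / lam)
    (X : Ω → ℝ)
    (hint : Integrable (fun ω => Real.exp (-lam * X ω)) μ) :
    (⨆ y : ℝ, (∫ ω, u (X ω + y) ∂μ) - y)
      = -(1 / lam) * Real.log (∫ ω, Real.exp (-lam * X ω) ∂μ) := by
  simp_rw [hu, integral_entropyUtility_add μ hint]
  exact (isGreatest_range_entropicObjective hlam (integral_exp_pos hint)).csSup_eq

/-- The OCE monetary utility of the exponential (entropy) utility
`u(x) = (1 − e^{−λx})/λ` equals the entropic risk-adjusted value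
`−(1/λ)·log E[e^{−λX}]`. -/
theorem oce_entropy
    {Ω : Type*} [MeasurableSpace Ω] (μ : Measure Ω) [IsProbabilityMeasure μ]
    (lam : ℝ) (hlam : 0 < lam)
    (u : ℝ → ℝ) (hu : ∀ x, u x = (1 - Real.exp (-lam * x)) / lam)
    (X : Ω → ℝ) (hX : Measurable X)
    (hint : Integrable (fun ω => Real.exp (-lam * X ω)) μ) :
    (⨆ y : ℝ, (∫ ω, u (X ω + y) ∂μ) - y)
      = -(1 / lam) * Real.log (∫ ω, Real.exp (-lam * X ω) ∂μ) :=
  oce_entropy_general μ lam hlam u hu X hint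
end
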